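/- arXiv:1509.03925 — 4 statements merged into one kernel-verified Lean document; each statement's English description precedes it below -/
import Mathlib

section
/- If A is an m×m doubly stochastic matrix and x_1,...,x_m ∈ ℝ^n, then setting v_i = ∑_j A_{ij} x_j, for any c ∈ ℝ^n one has ∑_i ‖v_i − c‖² = ∑_j ‖x_j − c‖² − (1/2) ∑_j ∑_ℓ ∑_i A_{ij} A_{iℓ} ‖x_j − x_ℓ‖². -/
/-!
Put `y j = x j - c`. Expanding `‖y j - y l‖²` with the inner product turns the double sum
`∑ j l, w j * w l * ‖y j - y l‖²` into `2 (∑ w) ∑ w j ‖y j‖² - 2 ‖∑ w j • y j‖²`. With `w = A i`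
(row sum `1`) this is a weighted variance identity for each `v i`, and summing over `i`
collapses `∑ i, A i j` to `1` by the column sums.
-/

open Finset

section WeightedVariance

variable {ι E : Type*} [NormedAddCommGroup E] [InnerProductSpace ℝ E]

theorem sum_sum_mul_norm_sub_sq (s : Finset ι) (w : ι → ℝ) (y : ι → E) :
    ∑ j ∈ s, ∑ l ∈ s, w j * w l * ‖y j - y l‖ ^ 2 =
      2 * ((∑ j ∈ s, w j) * ∑ j ∈ s, w j * ‖y j‖ ^ 2 - ‖∑ j ∈ s, w j • y j‖ ^ 2) := by
  have hnorm : ‖∑ j ∈ s, w j • y j‖ ^ 2 =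
      ∑ j ∈ s, ∑ l ∈ s, w j * w l * inner ℝ (y j) (y l) := by
    rw [← real_inner_self_eq_norm_sq, sum_inner]
    refine sum_congr rfl fun j _ => ?_
    simp only [inner_sum, real_inner_smul_left, real_inner_smul_right]
    exact sum_congr rfl fun l _ => by ring
  have hexpand : ∀ j l, w j * w l * ‖y j - y l‖ ^ 2 =
      w l * (w j * ‖y j‖ ^ 2) + w j * (w l * ‖y l‖ ^ 2)
        - 2 * (w j * w l * inner ℝ (y j) (y l)) := fun j l => by
    rw [norm_sub_sq_real]; ring
  simp only [hexpand, hnorm, sum_sub_distrib, sum_add_distrib, ← sum_mul, ← mul_sum]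
  ring

theorem norm_sum_smul_sub_sq (s : Finset ι) (w : ι → ℝ) (hw : ∑ j ∈ s, w j = 1)
    (x : ι → E) (c : E) :
    ‖∑ j ∈ s, w j • x j - c‖ ^ 2 =
      ∑ j ∈ s, w j * ‖x j - c‖ ^ 2
        - (1 / 2) * ∑ j ∈ s, ∑ l ∈ s, w j * w l * ‖x j - x l‖ ^ 2 := by
  have hcenter : ∑ j ∈ s, w j • x j - c = ∑ j ∈ s, w j • (x j - c) := by
    simp only [smul_sub, sum_sub_distrib, ← sum_smul, hw, one_smul]
  have hdiff : ∀ j l, x j - x l = (x j - c) - (x l - c) := fun j l => by abel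
  simp only [hdiff, sum_sum_mul_norm_sub_sq s w (fun j => x j - c), hcenter, hw]
  ring

end WeightedVariance

theorem stmt2_general {n m : ℕ} (A : Fin m → Fin m → ℝ)
    (hrow : ∀ i, ∑ j, A i j = 1) (hcol : ∀ j, ∑ i, A i j = 1)
    (x : Fin m → EuclideanSpace ℝ (Fin n)) (c : EuclideanSpace ℝ (Fin n)) :
    ∑ i, ‖(∑ j, A i j • x j) - c‖ ^ 2 =
      ∑ j, ‖x j - c‖ ^ 2
        - (1 / 2) * ∑ j, ∑ l, ∑ i, A i j * A i l * ‖x j - x l‖ ^ 2 := by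
  have hmix : ∑ i, ∑ j, A i j * ‖x j - c‖ ^ 2 = ∑ j, ‖x j - c‖ ^ 2 := by
    rw [sum_comm]
    simp only [← sum_mul, hcol, one_mul]
  have hreorder : ∑ i, ∑ j, ∑ l, A i j * A i l * ‖x j - x l‖ ^ 2 =
      ∑ j, ∑ l, ∑ i, A i j * A i l * ‖x j - x l‖ ^ 2 := by
    rw [sum_comm]
    exact sum_congr rfl fun j _ => sum_comm
  simp only [fun i => norm_sum_smul_sub_sq univ (A i) (hrow i) x c, sum_sub_distrib,
    ← mul_sum, hmix, hreorder]

theorem stmt2 {n m : ℕ} (A : Fin m → Fin m → ℝ)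
    (hnonneg : ∀ i j, 0 ≤ A i j)
    (hrow : ∀ i, ∑ j, A i j = 1) (hcol : ∀ j, ∑ i, A i j = 1)
    (x : Fin m → EuclideanSpace ℝ (Fin n)) (c : EuclideanSpace ℝ (Fin n)) :
    ∑ i, ‖(∑ j, A i j • x j) - c‖ ^ 2 =
      ∑ j, ‖x j - c‖ ^ 2
        - (1 / 2) * ∑ j, ∑ l, ∑ i, A i j * A i l * ‖x j - x l‖ ^ 2 :=
  stmt2_general A hrow hcol x c
end

section
/- Let h : ℝ^p → ℝ be differentiable, strongly convex with parameter κ > 0 on a closed convex set Θ, with ∇h Lipschitz with constant R on Θ. Let θ* minimize h over Θ. Then for any θ ∈ Θ, any γ > 0, and any vector β, setting θ⁺ = Π_Θ(θ − γ(∇h(θ) + β)), one has ‖θ⁺ − θ*‖² ≤ (1 − 2γκ + γ²R²)‖θ − θ*‖² + γ²‖β‖² − 2γ⟨β, θ − θ* − γ(∇h(θ) − ∇h(θ*))⟩. -/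
/-!
By first-order optimality `θstar` is the projection of `θstar - γ • gradh θstar`, and projection
onto a convex set is nonexpansive, so `‖θplus - θstar‖ ≤ ‖u - γ • β‖` with
`u = θ - θstar - γ • (gradh θ - gradh θstar)`. Expanding the square leaves `‖u‖ ^ 2`, which strong
monotonicity and Lipschitz continuity of the gradient bound by
`(1 - 2γκ + γ²R²) ‖θ - θstar‖ ^ 2`.
-/

open Set
open scoped RealInnerProductSpace

section InnerProductSpace

variable {F : Type*} [NormedAddCommGroup F] [InnerProductSpace ℝ F]

theorem IsMinOn.inner_gradient_sub_nonneg [CompleteSpace F] {f : F → ℝ} {s : Set F} {a g y : F}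
    (hs : Convex ℝ s) (hmin : IsMinOn f s a) (hf : HasGradientAt f g a) (ha : a ∈ s)
    (hy : y ∈ s) : 0 ≤ ⟪g, y - a⟫ :=
  hmin.localize.hasFDerivWithinAt_nonneg hf.hasFDerivAt.hasFDerivWithinAt
    (sub_mem_posTangentConeAt_of_segment_subset (hs.segment_subset ha hy))

theorem real_inner_sub_le_zero_of_forall_norm_sub_le {K : Set F} (hK : Convex ℝ K) {x p : F}
    (hp : p ∈ K) (hnearest : ∀ y ∈ K, ‖x - p‖ ≤ ‖x - y‖) : ∀ w ∈ K, ⟪x - p, w - p⟫ ≤ 0 := by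
  have : Nonempty K := ⟨⟨p, hp⟩⟩
  rw [← norm_eq_iInf_iff_real_inner_le_zero hK hp]
  exact le_antisymm (le_ciInf fun w => hnearest w w.2) <|
    ciInf_le (f := fun w : K => ‖x - w‖) ⟨0, forall_mem_range.2 fun _ => norm_nonneg _⟩ ⟨p, hp⟩

/-- Nonexpansiveness of the projection onto a convex set, in variational form. -/
theorem norm_sub_le_of_real_inner_sub_le_zero {x₁ x₂ p₁ p₂ : F}
    (h₁ : ⟪x₁ - p₁, p₂ - p₁⟫ ≤ 0) (h₂ : ⟪x₂ - p₂, p₁ - p₂⟫ ≤ 0) :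
    ‖p₁ - p₂‖ ≤ ‖x₁ - x₂‖ := by
  have hsq : ‖p₁ - p₂‖ ^ 2 ≤ ⟪x₁ - x₂, p₁ - p₂⟫ := by
    have hsplit : ⟪x₁ - x₂, p₁ - p₂⟫
        = ‖p₁ - p₂‖ ^ 2 - ⟪x₁ - p₁, p₂ - p₁⟫ - ⟪x₂ - p₂, p₁ - p₂⟫ := by
      rw [← real_inner_self_eq_norm_sq, ← neg_sub p₁ p₂, inner_neg_right, sub_neg_eq_add,
        ← inner_add_left, ← inner_sub_left]
      congr 1
      abel
    linarith
  nlinarith [real_inner_le_norm (x₁ - x₂) (p₁ - p₂), norm_nonneg (p₁ - p₂),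
    norm_nonneg (x₁ - x₂)]

theorem norm_sub_smul_sq_le {u d : F} {κ R γ : ℝ} (hmono : κ * ‖u‖ ^ 2 ≤ ⟪d, u⟫)
    (hlip : ‖d‖ ≤ R * ‖u‖) (hγ : 0 ≤ γ) :
    ‖u - γ • d‖ ^ 2 ≤ (1 - 2 * γ * κ + γ ^ 2 * R ^ 2) * ‖u‖ ^ 2 := by
  have hd : ‖d‖ ^ 2 ≤ R ^ 2 * ‖u‖ ^ 2 := by
    rw [← mul_pow]; exact pow_le_pow_left₀ (norm_nonneg d) hlip 2
  rw [norm_sub_sq_real, real_inner_smul_right, real_inner_comm, norm_smul, Real.norm_eq_abs,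
    mul_pow, sq_abs]
  nlinarith [mul_le_mul_of_nonneg_left hmono hγ, mul_le_mul_of_nonneg_left hd (sq_nonneg γ)]

end InnerProductSpace

theorem stmt5_general {p : ℕ} (Θ : Set (EuclideanSpace ℝ (Fin p)))
    (hΘconv : Convex ℝ Θ)
    (h : EuclideanSpace ℝ (Fin p) → ℝ)
    (gradh : EuclideanSpace ℝ (Fin p) → EuclideanSpace ℝ (Fin p))
    (hgrad : ∀ θ, HasGradientAt h (gradh θ) θ)
    (κ R : ℝ)
    (hstrong : ∀ a ∈ Θ, ∀ b ∈ Θ, κ * ‖a - b‖ ^ 2 ≤ (inner ℝ (gradh a - gradh b) (a - b) : ℝ))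
    (hlip : ∀ a ∈ Θ, ∀ b ∈ Θ, ‖gradh a - gradh b‖ ≤ R * ‖a - b‖)
    (θstar : EuclideanSpace ℝ (Fin p)) (hθstar : θstar ∈ Θ)
    (hmin : ∀ θ ∈ Θ, h θstar ≤ h θ)
    (θ : EuclideanSpace ℝ (Fin p)) (hθ : θ ∈ Θ)
    (γ : ℝ) (hγ : 0 < γ) (β : EuclideanSpace ℝ (Fin p))
    (θplus : EuclideanSpace ℝ (Fin p)) (hplusmem : θplus ∈ Θ)
    (hproj : ∀ y ∈ Θ, ‖(θ - γ • (gradh θ + β)) - θplus‖ ≤ ‖(θ - γ • (gradh θ + β)) - y‖) :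
    ‖θplus - θstar‖ ^ 2 ≤ (1 - 2 * γ * κ + γ ^ 2 * R ^ 2) * ‖θ - θstar‖ ^ 2
      + γ ^ 2 * ‖β‖ ^ 2
      - 2 * γ * (inner ℝ β (θ - θstar - γ • (gradh θ - gradh θstar)) : ℝ) := by
  set u := θ - θstar - γ • (gradh θ - gradh θstar)
  have hfixed : ∀ w ∈ Θ, ⟪(θstar - γ • gradh θstar) - θstar, w - θstar⟫ ≤ 0 := by
    intro w hw
    have := (isMinOn_iff.2 hmin).inner_gradient_sub_nonneg hΘconv (hgrad θstar) hθstar hw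
    rw [sub_sub_cancel_left, inner_neg_left, real_inner_smul_left]
    nlinarith
  have hnonexp : ‖θplus - θstar‖ ≤ ‖u - γ • β‖ := by
    have := norm_sub_le_of_real_inner_sub_le_zero
      (real_inner_sub_le_zero_of_forall_norm_sub_le hΘconv hplusmem hproj θstar hθstar)
      (hfixed θplus hplusmem)
    rwa [show θ - γ • (gradh θ + β) - (θstar - γ • gradh θstar) = u - γ • β by module] at this
  have hcontr : ‖u‖ ^ 2 ≤ (1 - 2 * γ * κ + γ ^ 2 * R ^ 2) * ‖θ - θstar‖ ^ 2 :=
    norm_sub_smul_sq_le (hstrong θ hθ θstar hθstar) (hlip θ hθ θstar hθstar) hγ.le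
  calc ‖θplus - θstar‖ ^ 2 ≤ ‖u - γ • β‖ ^ 2 := by gcongr
    _ = ‖u‖ ^ 2 + γ ^ 2 * ‖β‖ ^ 2 - 2 * γ * ⟪β, u⟫ := by
      rw [norm_sub_sq_real, real_inner_smul_right, real_inner_comm, norm_smul, Real.norm_eq_abs,
        mul_pow, sq_abs]
      ring
    _ ≤ _ := by linarith

theorem stmt5 {p : ℕ} (Θ : Set (EuclideanSpace ℝ (Fin p)))
    (hΘclosed : IsClosed Θ) (hΘconv : Convex ℝ Θ)
    (h : EuclideanSpace ℝ (Fin p) → ℝ)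
    (gradh : EuclideanSpace ℝ (Fin p) → EuclideanSpace ℝ (Fin p))
    (hgrad : ∀ θ, HasGradientAt h (gradh θ) θ)
    (κ R : ℝ) (hκ : 0 < κ)
    (hstrong : ∀ a ∈ Θ, ∀ b ∈ Θ, κ * ‖a - b‖ ^ 2 ≤ (inner ℝ (gradh a - gradh b) (a - b) : ℝ))
    (hlip : ∀ a ∈ Θ, ∀ b ∈ Θ, ‖gradh a - gradh b‖ ≤ R * ‖a - b‖)
    (θstar : EuclideanSpace ℝ (Fin p)) (hθstar : θstar ∈ Θ)
    (hmin : ∀ θ ∈ Θ, h θstar ≤ h θ)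
    (θ : EuclideanSpace ℝ (Fin p)) (hθ : θ ∈ Θ)
    (γ : ℝ) (hγ : 0 < γ) (β : EuclideanSpace ℝ (Fin p))
    (θplus : EuclideanSpace ℝ (Fin p)) (hplusmem : θplus ∈ Θ)
    (hproj : ∀ y ∈ Θ, ‖(θ - γ • (gradh θ + β)) - θplus‖ ≤ ‖(θ - γ • (gradh θ + β)) - y‖) :
    ‖θplus - θstar‖ ^ 2 ≤ (1 - 2 * γ * κ + γ ^ 2 * R ^ 2) * ‖θ - θstar‖ ^ 2
      + γ ^ 2 * ‖β‖ ^ 2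
      - 2 * γ * (inner ℝ β (θ - θstar - γ • (gradh θ - gradh θstar)) : ℝ) :=
  stmt5_general Θ hΘconv h gradh hgrad κ R hstrong hlip θstar hθstar hmin θ hθ γ hγ β θplus hplusmem
    hproj
end

section
/- Let X ⊆ ℝ^n be convex with a point x̄ and δ > 0 such that the closed ball B(x̄, δ) ⊆ X. Let x_1,...,x_m with x_j ∈ X_j where X_j are convex compact sets each containing X, with diameter of each X_j at most D. Let x̂ = (1/m)∑_j x_j. Then ∑_{j=1}^m ‖x_j − Π_X(x̂)‖ ≤ m(1 + mD/δ) · max_{j,ℓ} ‖x_j − x_ℓ‖. -/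
/-!
Let `M := max ‖x j - x l‖`. The average `x̂` is within `M` of every `x j` and within `D` of `x̄`.
Moving `x̂` towards `x̄` by the fraction `M / (δ + M)` gives, for every `j`, a convex combination
of `x j` and a point of `B(x̄, δ)`, hence a point of `X` at distance at most `(M / δ) D` from `x̂`.
So `‖x̂ - Π_X x̂‖ ≤ M D / δ`, and the triangle inequality through `x̂` gives the bound.
-/

open AffineMap Metric

section

variable {E : Type*} [NormedAddCommGroup E] [NormedSpace ℝ E]

theorem norm_average_sub_le {ι : Type*} [Fintype ι] [Nonempty ι] {x : ι → E} {y : E} {r : ℝ}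
    (h : ∀ i, ‖x i - y‖ ≤ r) : ‖(Fintype.card ι : ℝ)⁻¹ • ∑ i, x i - y‖ ≤ r := by
  have hcard : (0 : ℝ) < Fintype.card ι := by exact_mod_cast Fintype.card_pos
  have hmem : ∑ i, (Fintype.card ι : ℝ)⁻¹ • x i ∈ closedBall y r :=
    (convex_closedBall y r).sum_mem (fun _ _ ↦ by positivity)
      (by simp [Finset.card_univ, hcard.ne'])
      (fun i _ ↦ by simpa [dist_eq_norm] using h i)
  simpa [Finset.smul_sum, dist_eq_norm] using hmem

theorem Convex.lineMap_mem_of_closedBall_subset {K : Set E} (hK : Convex ℝ K) {c a y : E}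
    {δ M : ℝ} (hδ : 0 < δ) (hball : closedBall c δ ⊆ K) (hy : y ∈ K) (hay : ‖a - y‖ ≤ M) :
    lineMap c a (δ / (δ + M)) ∈ K := by
  rcases (norm_nonneg _).trans hay |>.eq_or_lt with rfl | hM
  · rw [sub_eq_zero.mp (norm_le_zero_iff.mp hay), add_zero, div_self hδ.ne', lineMap_apply_one]
    exact hy
  -- `w` lies in the ball, and the point of parameter `t` on `[c, a]` is also the one on `[w, y]`.
  set w := c + (δ / M) • (a - y)
  have hw : w ∈ K := hball <| by
    rw [mem_closedBall, dist_eq_norm, add_sub_cancel_left, norm_smul, Real.norm_of_nonneg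
      (by positivity)]
    calc δ / M * ‖a - y‖ ≤ δ / M * M := by gcongr
      _ = δ := div_mul_cancel₀ δ hM.ne'
  have hline : lineMap c a (δ / (δ + M)) = lineMap w y (δ / (δ + M)) := by
    simp only [w, lineMap_apply_module]
    match_scalars <;> field_simp <;> ring
  rw [hline]
  exact hK.lineMap_mem hw hy ⟨by positivity, div_le_one_of_le₀ (by linarith) (by positivity)⟩

theorem norm_sub_lineMap_div_add_le (c a : E) {δ M : ℝ} (hδ : 0 < δ) (hM : 0 ≤ M) :
    ‖a - lineMap c a (δ / (δ + M))‖ ≤ M / δ * ‖a - c‖ := by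
  have hcoef : 1 - δ / (δ + M) = M / (δ + M) := by field_simp; ring
  rw [← dist_eq_norm, dist_right_lineMap, hcoef, Real.norm_of_nonneg (by positivity),
    dist_eq_norm_sub']
  gcongr
  linarith

end

theorem stmt13_general {n m : ℕ} (hm : 0 < m)
    (Xs : Fin m → Set (EuclideanSpace ℝ (Fin n)))
    (hconv : ∀ j, Convex ℝ (Xs j))
    (D : ℝ) (hD : ∀ j, ∀ a ∈ Xs j, ∀ b ∈ Xs j, ‖a - b‖ ≤ D)
    (xbar : EuclideanSpace ℝ (Fin n)) (δ : ℝ) (hδ : 0 < δ)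
    (hball : Metric.closedBall xbar δ ⊆ ⋂ j, Xs j)
    (x : Fin m → EuclideanSpace ℝ (Fin n)) (hx : ∀ j, x j ∈ Xs j)
    (p : EuclideanSpace ℝ (Fin n))
    (hproj : ∀ z ∈ (⋂ j, Xs j),
      ‖(m : ℝ)⁻¹ • (∑ j, x j) - p‖ ≤ ‖(m : ℝ)⁻¹ • (∑ j, x j) - z‖) :
    ∑ j, ‖x j - p‖ ≤ m * (1 + m * D / δ) * (⨆ j, ⨆ l, ‖x j - x l‖) := by
  have : Nonempty (Fin m) := ⟨⟨0, hm⟩⟩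
  set a := (m : ℝ)⁻¹ • ∑ j, x j
  set M := ⨆ j, ⨆ l, ‖x j - x l‖
  have hM : ∀ j l, ‖x j - x l‖ ≤ M := fun j l ↦
    le_ciSup_of_le (Set.finite_range _).bddAbove j
      (le_ciSup (f := fun l ↦ ‖x j - x l‖) (Set.finite_range _).bddAbove l)
  have hM0 : 0 ≤ M := by simpa using hM ⟨0, hm⟩ ⟨0, hm⟩
  have hD0 : 0 ≤ D := by simpa using hD ⟨0, hm⟩ _ (hx _) _ (hx _)
  have hxa : ∀ j, ‖a - x j‖ ≤ M := fun j ↦ by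
    simpa only [Fintype.card_fin] using
      norm_average_sub_le (x := x) fun l ↦ (norm_sub_rev _ _).trans_le (hM j l)
  have hxbar : ∀ j, xbar ∈ Xs j := Set.mem_iInter.mp (hball (mem_closedBall_self hδ.le))
  have hac : ‖a - xbar‖ ≤ D := by
    simpa only [Fintype.card_fin] using
      norm_average_sub_le (x := x) fun l ↦ hD l _ (hx l) _ (hxbar l)
  set z := lineMap xbar a (δ / (δ + M))
  have hz : z ∈ ⋂ j, Xs j := Set.mem_iInter.mpr fun j ↦
    (hconv j).lineMap_mem_of_closedBall_subset hδ (hball.trans (Set.iInter_subset _ j)) (hx j)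
      (hxa j)
  have hap : ‖a - p‖ ≤ M / δ * D :=
    calc ‖a - p‖ ≤ ‖a - z‖ := hproj z hz
      _ ≤ M / δ * ‖a - xbar‖ := norm_sub_lineMap_div_add_le xbar a hδ hM0
      _ ≤ M / δ * D := by gcongr
  have hm1 : (1 : ℝ) ≤ m := by exact_mod_cast hm
  calc ∑ j, ‖x j - p‖ ≤ ∑ _j : Fin m, (M + M / δ * D) := Finset.sum_le_sum fun j _ ↦
        (norm_sub_le_norm_sub_add_norm_sub (x j) a p).trans
          (add_le_add (by rw [norm_sub_rev]; exact hxa j) hap)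
    _ = m * (M + M / δ * D) := by simp [mul_add]
    _ ≤ m * (M + M / δ * D * m) := by
        gcongr m * (M + ?_)
        exact le_mul_of_one_le_right (by positivity) hm1
    _ = m * (1 + m * D / δ) * M := by ring

theorem stmt13 {n m : ℕ} (hm : 0 < m)
    (Xs : Fin m → Set (EuclideanSpace ℝ (Fin n)))
    (hconv : ∀ j, Convex ℝ (Xs j)) (hcomp : ∀ j, IsCompact (Xs j))
    (D : ℝ) (hD : ∀ j, ∀ a ∈ Xs j, ∀ b ∈ Xs j, ‖a - b‖ ≤ D)
    (xbar : EuclideanSpace ℝ (Fin n)) (δ : ℝ) (hδ : 0 < δ)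
    (hball : Metric.closedBall xbar δ ⊆ ⋂ j, Xs j)
    (x : Fin m → EuclideanSpace ℝ (Fin n)) (hx : ∀ j, x j ∈ Xs j)
    (p : EuclideanSpace ℝ (Fin n)) (hp : p ∈ ⋂ j, Xs j)
    (hproj : ∀ z ∈ (⋂ j, Xs j),
      ‖(m : ℝ)⁻¹ • (∑ j, x j) - p‖ ≤ ‖(m : ℝ)⁻¹ • (∑ j, x j) - z‖) :
    ∑ j, ‖x j - p‖ ≤ m * (1 + m * D / δ) * (⨆ j, ⨆ l, ‖x j - x l‖) :=
  stmt13_general hm Xs hconv D hD xbar δ hδ hball x hx p hproj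
end

section
/- Let A be an m×m doubly stochastic matrix whose positive entries are all ≥ η > 0, and suppose the graph G with edge {i,j} present whenever A_{ij} > 0 (i ≠ j), together with all self-loops A_{ii} > 0, is connected. Then there exists a spanning tree T of G such that (1/2) ∑_j ∑_ℓ ∑_i A_{ij} A_{iℓ} ‖x_j − x_ℓ‖² ≥ η² ∑_{{s,ℓ} ∈ T} ‖x_s − x_ℓ‖² for all x_1,...,x_m ∈ ℝ^n. -/
/-!
Take any spanning tree `T` of the graph of `A`. For an edge `{a, b}`, say with `A a b > 0`, the
entry `(Aᵀ A) a b = ∑ i, A i a * A i b` contains the summand `A a a * A a b ≥ η²`, because the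
diagonal is positive. The right-hand side is half the sum, over all ordered pairs `(a, b)`, of
`(Aᵀ A) a b * ‖x a - x b‖²`; each edge of `T` appears there twice, as its two orientations,
which cancels the factor `1 / 2`.
-/

open Finset

namespace SimpleGraph

variable {V : Type*} [Fintype V] (G : SimpleGraph V) [DecidableRel G.Adj]

theorem sum_darts_edge {M : Type*} [AddCommMonoid M] (f : Sym2 V → M) :
    ∑ d : G.Dart, f d.edge = 2 • ∑ e ∈ G.edgeFinset, f e := by
  classical
  rw [← sum_fiberwise_of_maps_to (g := Dart.edge) fun d _ => G.mem_edgeFinset.2 d.edge_mem,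
    smul_sum]
  refine sum_congr rfl fun e he => ?_
  rw [sum_congr rfl fun d hd => congrArg f (mem_filter.1 hd).2, sum_const,
    G.dart_edge_fiber_card e (G.mem_edgeFinset.1 he)]

theorem sum_edgeFinset_lift_le_half_sum {f : V → V → ℝ} (hsymm : ∀ a b, f a b = f b a)
    (hf : ∀ a b, 0 ≤ f a b) :
    ∑ e ∈ G.edgeFinset, Sym2.lift ⟨f, hsymm⟩ e ≤ 1 / 2 * ∑ a, ∑ b, f a b := by
  have hdarts :
      ∑ d : G.Dart, f d.fst d.snd = 2 * ∑ e ∈ G.edgeFinset, Sym2.lift ⟨f, hsymm⟩ e := by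
    rw [two_mul, ← two_nsmul]
    exact G.sum_darts_edge (Sym2.lift ⟨f, hsymm⟩)
  have hdarts_le : ∑ d : G.Dart, f d.fst d.snd ≤ ∑ a, ∑ b, f a b :=
    calc _ = ∑ p ∈ univ.map ⟨Dart.toProd, Dart.toProd_injective⟩, f p.1 p.2 :=
          (sum_map _ _ _).symm
      _ ≤ ∑ p : V × V, f p.1 p.2 := sum_le_univ_sum_of_nonneg fun p => hf p.1 p.2
      _ = ∑ a, ∑ b, f a b := Fintype.sum_prod_type _
  linarith

end SimpleGraph

theorem sq_le_sum_mul_of_fromRel_adj {ι : Type*} [Fintype ι] {A : ι → ι → ℝ} {η : ℝ}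
    (hη : 0 ≤ η) (hnonneg : ∀ i j, 0 ≤ A i j) (hdiag : ∀ i, 0 < A i i)
    (hbound : ∀ i j, 0 < A i j → η ≤ A i j) {a b : ι}
    (hab : (SimpleGraph.fromRel fun i j => 0 < A i j).Adj a b) :
    η ^ 2 ≤ ∑ i, A i a * A i b := by
  have hterm : ∀ i, 0 ≤ A i a * A i b := fun i => mul_nonneg (hnonneg i a) (hnonneg i b)
  rw [sq]
  rcases (SimpleGraph.fromRel_adj _ a b).1 hab |>.2 with hpos | hpos
  · calc η * η ≤ A a a * A a b :=
          mul_le_mul (hbound a a (hdiag a)) (hbound a b hpos) hη (hnonneg a a)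
      _ ≤ ∑ i, A i a * A i b := single_le_sum (fun i _ => hterm i) (mem_univ a)
  · calc η * η ≤ A b a * A b b :=
          mul_le_mul (hbound b a hpos) (hbound b b (hdiag b)) hη (hnonneg b a)
      _ ≤ ∑ i, A i a * A i b := single_le_sum (fun i _ => hterm i) (mem_univ b)

open scoped Classical in
theorem stmt15 {n m : ℕ} (A : Fin m → Fin m → ℝ) (η : ℝ) (hη : 0 < η)
    (hnonneg : ∀ i j, 0 ≤ A i j)
    (hdiag : ∀ i, 0 < A i i)
    (hbound : ∀ i j, 0 < A i j → η ≤ A i j)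
    (hconn : (SimpleGraph.fromRel fun i j => 0 < A i j).Connected) :
    ∃ T : SimpleGraph (Fin m),
      T ≤ (SimpleGraph.fromRel fun i j => 0 < A i j) ∧ T.IsTree ∧
      ∀ x : Fin m → EuclideanSpace ℝ (Fin n),
        η ^ 2 * ∑ e ∈ T.edgeFinset,
            Sym2.lift ⟨fun a b => ‖x a - x b‖ ^ 2, by
              intro a b; simp only []; rw [norm_sub_rev]⟩ e ≤
          (1 / 2) * ∑ j, ∑ l, ∑ i, A i j * A i l * ‖x j - x l‖ ^ 2 := by
  obtain ⟨T, hTle, hT⟩ := hconn.exists_isTree_le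
  refine ⟨T, hTle, hT, fun x => ?_⟩
  set w : Fin m → Fin m → ℝ := fun a b => (∑ i, A i a * A i b) * ‖x a - x b‖ ^ 2
  have hw_symm : ∀ a b, w a b = w b a := fun a b => by
    simp only [w, mul_comm (A _ a), norm_sub_rev]
  have hw_nonneg : ∀ a b, 0 ≤ w a b := fun a b =>
    mul_nonneg (sum_nonneg fun i _ => mul_nonneg (hnonneg i a) (hnonneg i b)) (sq_nonneg _)
  calc _ ≤ ∑ e ∈ T.edgeFinset, Sym2.lift ⟨w, hw_symm⟩ e := by
        rw [mul_sum]
        refine sum_le_sum fun e he => ?_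
        induction e using Sym2.ind with
        | _ a b =>
          exact mul_le_mul_of_nonneg_right
            (sq_le_sum_mul_of_fromRel_adj hη.le hnonneg hdiag hbound
              (hTle (T.mem_edgeFinset.1 he)))
            (sq_nonneg _)
    _ ≤ 1 / 2 * ∑ a, ∑ b, w a b := T.sum_edgeFinset_lift_le_half_sum hw_symm hw_nonneg
    _ = _ := by simp only [w, sum_mul]
end
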